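/- Between two consecutive relabeling times R_{q-1} < R_q, for each N with R_{q-1} < N < R_q the word W(N) contains exactly R_q - N letters equal to c (the largest gap length occurs exactly R_q - N times). -/

import Mathlib

/-- The cyclic gap after the point `{m α}` among the points `{0α}, …, {(N-1)α}` on ℝ/ℤ:
the infimum of positive circular distances from `{m α}` to the other points. -/
noncomputable def gapAt (α : ℝ) (N : ℕ) (m : ℕ) : ℝ :=
  sInf {d : ℝ | 0 < d ∧ ∃ m' : ℕ, m' < N ∧ Int.fract ((m' : ℝ) * α - (m : ℝ) * α) = d}

open Classical in
/-- The set of distinct cyclic gap lengths of the configuration `{0α}, …, {(N-1)α}`. -/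
noncomputable def gapSet (α : ℝ) (N : ℕ) : Finset ℝ :=
  (Finset.range N).image (gapAt α N)

/-- The multiset of cyclic gaps of the configuration `{0α}, …, {(N-1)α}`. -/
noncomputable def gapMult (α : ℝ) (N : ℕ) : Multiset ℝ :=
  (Multiset.range N).map (gapAt α N)

/-- Cyclic extension of the ordering permutation `u` to integer indices, mod `N`. -/
def uc (N : ℕ) (u : ℕ → ℕ) (j : ℤ) : ℕ := u ((j % (N : ℤ)).toNat)

/-!
Let `p` and `q` be the indices in `[1, N)` whose points `{pα}` and `{qα}` are the nearest to `0`
from the right and from the left, and put `a = {pα}`, `b = {q(-α)} = 1 - {qα}`. Additivity of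
`k ↦ {kα}` modulo `1` together with the extremality of `p` and `q` gives `N ≤ p + q` and shows that
the gap after `{mα}` is `a` if `m + p < N`, `b` if `q ≤ m`, and `a + b` for the remaining
`p + q - N` indices `N - p ≤ m < q`. So there are exactly two gap lengths iff `N = p + q`. While
`N < p + q` the new point `{Nα}` falls between `{pα}` and `{qα}`, so `p` and `q` persist up to
`N = p + q`, which is therefore the next relabeling time.

Replacing `α` by `-α` swaps the roles of `p` and `q` (and of `a` and `b`), so every estimate is
proved on one side only.
-/

section FloorRing

variable {R : Type*} [CommRing R] [LinearOrder R] [IsStrictOrderedRing R] [FloorRing R] {x y : R}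

theorem Int.fract_add_of_fract_add_fract_lt_one (h : Int.fract x + Int.fract y < 1) :
    Int.fract (x + y) = Int.fract x + Int.fract y :=
  Int.fract_eq_iff.2 ⟨add_nonneg (Int.fract_nonneg x) (Int.fract_nonneg y), h, ⌊x⌋ + ⌊y⌋, by
    unfold Int.fract; push_cast; ring⟩

theorem Int.fract_add_of_one_le_fract_add_fract (h : 1 ≤ Int.fract x + Int.fract y) :
    Int.fract (x + y) = Int.fract x + Int.fract y - 1 :=
  Int.fract_eq_iff.2 ⟨sub_nonneg.2 h, by linarith [Int.fract_lt_one x, Int.fract_lt_one y],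
    ⌊x⌋ + ⌊y⌋ + 1, by unfold Int.fract; push_cast; ring⟩

theorem Int.fract_sub_of_fract_le (h : Int.fract y ≤ Int.fract x) :
    Int.fract (x - y) = Int.fract x - Int.fract y :=
  Int.fract_eq_iff.2 ⟨sub_nonneg.2 h, by linarith [Int.fract_lt_one x, Int.fract_nonneg y],
    ⌊x⌋ - ⌊y⌋, by unfold Int.fract; push_cast; ring⟩

end FloorRing

namespace Irrational

variable {α : ℝ} {j k : ℕ}

theorem fract_natCast_mul_pos (hα : Irrational α) (hk : k ≠ 0) : 0 < Int.fract (k * α) :=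
  Int.fract_pos.2 ((hα.natCast_mul hk).ne_int _)

theorem fract_natCast_mul_injective (hα : Irrational α) :
    Function.Injective fun k : ℕ => Int.fract (k * α) := by
  intro j k h
  by_contra hjk
  obtain ⟨z, hz⟩ := Int.fract_eq_fract.1 h
  refine (hα.intCast_mul (sub_ne_zero.2 (Int.natCast_inj.not.2 hjk))).ne_int z ?_
  push_cast
  linarith

theorem fract_natCast_mul_neg (hα : Irrational α) (hk : k ≠ 0) :
    Int.fract (k * -α) = 1 - Int.fract (k * α) := by
  rw [mul_neg, Int.fract_neg (hα.fract_natCast_mul_pos hk).ne']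

theorem fract_natCast_mul_ne_fract_natCast_mul_neg (hα : Irrational α) (h : j + k ≠ 0) :
    Int.fract (j * α) ≠ Int.fract (k * -α) := by
  intro hjk
  obtain ⟨z, hz⟩ := Int.fract_eq_fract.1 hjk
  exact (hα.natCast_mul h).ne_int z (by push_cast; linarith)

end Irrational

def IsMinFract (α : ℝ) (N p : ℕ) : Prop :=
  p ∈ Finset.Ico 1 N ∧ ∀ k ∈ Finset.Ico 1 N, Int.fract (p * α) ≤ Int.fract (k * α)

def IsMaxFract (α : ℝ) (N q : ℕ) : Prop :=
  q ∈ Finset.Ico 1 N ∧ ∀ k ∈ Finset.Ico 1 N, Int.fract (k * α) ≤ Int.fract (q * α)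

section MinMaxFract

variable {α : ℝ} {N p q k : ℕ}

theorem exists_isMinFract (α : ℝ) (hN : 2 ≤ N) : ∃ p, IsMinFract α N p :=
  Finset.exists_min_image _ _ ⟨1, Finset.mem_Ico.2 ⟨le_rfl, hN⟩⟩

theorem exists_isMaxFract (α : ℝ) (hN : 2 ≤ N) : ∃ q, IsMaxFract α N q :=
  Finset.exists_max_image _ _ ⟨1, Finset.mem_Ico.2 ⟨le_rfl, hN⟩⟩

theorem IsMinFract.one_le (hp : IsMinFract α N p) : 1 ≤ p := (Finset.mem_Ico.1 hp.1).1
theorem IsMinFract.lt (hp : IsMinFract α N p) : p < N := (Finset.mem_Ico.1 hp.1).2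
theorem IsMaxFract.one_le (hq : IsMaxFract α N q) : 1 ≤ q := (Finset.mem_Ico.1 hq.1).1
theorem IsMaxFract.lt (hq : IsMaxFract α N q) : q < N := (Finset.mem_Ico.1 hq.1).2

theorem IsMinFract.le (hp : IsMinFract α N p) (hk : k ≠ 0) (hkN : k < N) :
    Int.fract (p * α) ≤ Int.fract (k * α) :=
  hp.2 k (Finset.mem_Ico.2 ⟨Nat.one_le_iff_ne_zero.2 hk, hkN⟩)

theorem IsMaxFract.le (hq : IsMaxFract α N q) (hk : k ≠ 0) (hkN : k < N) :
    Int.fract (k * α) ≤ Int.fract (q * α) :=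
  hq.2 k (Finset.mem_Ico.2 ⟨Nat.one_le_iff_ne_zero.2 hk, hkN⟩)

theorem IsMinFract.neg (hα : Irrational α) (hp : IsMinFract α N p) : IsMaxFract (-α) N p := by
  refine ⟨hp.1, fun k hk => ?_⟩
  have hk0 : k ≠ 0 := by have := (Finset.mem_Ico.1 hk).1; omega
  rw [hα.fract_natCast_mul_neg hk0, hα.fract_natCast_mul_neg (by have := hp.one_le; omega)]
  linarith [hp.2 k hk]

theorem IsMaxFract.neg (hα : Irrational α) (hq : IsMaxFract α N q) : IsMinFract (-α) N q := by
  refine ⟨hq.1, fun k hk => ?_⟩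
  have hk0 : k ≠ 0 := by have := (Finset.mem_Ico.1 hk).1; omega
  rw [hα.fract_natCast_mul_neg hk0, hα.fract_natCast_mul_neg (by have := hq.one_le; omega)]
  linarith [hq.2 k hk]

theorem IsMinFract.succ (hp : IsMinFract α N p) (hN : Int.fract (p * α) ≤ Int.fract (N * α)) :
    IsMinFract α (N + 1) p := by
  refine ⟨Finset.mem_Ico.2 ⟨hp.one_le, by have := hp.lt; omega⟩, fun k hk => ?_⟩
  obtain ⟨hk1, hkN⟩ := Finset.mem_Ico.1 hk
  rcases Nat.lt_succ_iff_lt_or_eq.1 hkN with hkN | rfl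
  · exact hp.2 k (Finset.mem_Ico.2 ⟨hk1, hkN⟩)
  · exact hN

theorem IsMaxFract.succ (hq : IsMaxFract α N q) (hN : Int.fract (N * α) ≤ Int.fract (q * α)) :
    IsMaxFract α (N + 1) q := by
  refine ⟨Finset.mem_Ico.2 ⟨hq.one_le, by have := hq.lt; omega⟩, fun k hk => ?_⟩
  obtain ⟨hk1, hkN⟩ := Finset.mem_Ico.1 hk
  rcases Nat.lt_succ_iff_lt_or_eq.1 hkN with hkN | rfl
  · exact hq.2 k (Finset.mem_Ico.2 ⟨hk1, hkN⟩)
  · exact hN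

theorem IsMaxFract.fract_neg_le (hα : Irrational α) (hq : IsMaxFract α N q) (hk : k ≠ 0)
    (hkq : k + q < N) : Int.fract (q * -α) ≤ Int.fract (k * α) := by
  rw [hα.fract_natCast_mul_neg (by linarith [hq.one_le])]
  by_contra! h
  have hmax := hq.le (k := k + q) (by omega) hkq
  rw [Nat.cast_add, add_mul, Int.fract_add_of_fract_add_fract_lt_one (by linarith)] at hmax
  linarith [hα.fract_natCast_mul_pos hk]

theorem IsMinFract.le_fract_neg (hα : Irrational α) (hp : IsMinFract α N p) (hk : k ≠ 0)
    (hkp : k + p < N) : Int.fract (p * α) ≤ Int.fract (k * -α) := by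
  simpa only [neg_neg] using (hp.neg hα).fract_neg_le hα.neg hk hkp

theorem IsMinFract.add_fract_neg_le (hα : Irrational α) (hp : IsMinFract α N p)
    (hq : IsMaxFract α N q) (hk : k ≠ 0) (hkp : k < p) :
    Int.fract (p * α) + Int.fract (q * -α) ≤ Int.fract (k * α) := by
  have hpN := hp.lt
  have hqN := hq.lt
  have hq0 : q ≠ 0 := by linarith [hq.one_le]
  rcases lt_or_ge (k + q) N with hkq | hkq
  · have hsum : 1 ≤ Int.fract (k * α) + Int.fract (q * α) := by
      linarith [hq.fract_neg_le hα hk hkq, hα.fract_natCast_mul_neg hq0]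
    have hmin := hp.le (k := k + q) (by omega) hkq
    rw [Nat.cast_add, add_mul, Int.fract_add_of_one_le_fract_add_fract hsum] at hmin
    linarith [hα.fract_natCast_mul_neg hq0]
  · -- otherwise the index `q + k - p < N` would beat `q`
    rw [hα.fract_natCast_mul_neg hq0]
    by_contra! h
    have hpk : Int.fract (p * α) < Int.fract (k * α) :=
      (hp.le hk (by omega)).lt_of_ne (hα.fract_natCast_mul_injective.ne (by omega))
    have hdiff := Int.fract_sub_of_fract_le hpk.le
    have hmax := hq.le (k := q + k - p) (by omega) (by omega)
    rw [Nat.cast_sub (by omega), Nat.cast_add,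
      show ((q : ℝ) + k - p) * α = q * α + (k * α - p * α) by ring,
      Int.fract_add_of_fract_add_fract_lt_one (by linarith), hdiff] at hmax
    linarith

theorem IsMaxFract.add_le_fract_neg (hα : Irrational α) (hp : IsMinFract α N p)
    (hq : IsMaxFract α N q) (hk : k ≠ 0) (hkq : k < q) :
    Int.fract (p * α) + Int.fract (q * -α) ≤ Int.fract (k * -α) := by
  simpa only [neg_neg, add_comm] using (hq.neg hα).add_fract_neg_le hα.neg (hp.neg hα) hk hkq

theorem IsMinFract.le_add (hα : Irrational α) (hp : IsMinFract α N p) (hq : IsMaxFract α N q) :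
    N ≤ p + q := by
  by_contra! h
  have hp0 : p ≠ 0 := by linarith [hp.one_le]
  have hq0 : q ≠ 0 := by linarith [hq.one_le]
  exact hα.fract_natCast_mul_ne_fract_natCast_mul_neg (by omega)
    ((hp.le_fract_neg hα hq0 (by omega)).antisymm (hq.fract_neg_le hα hp0 (by omega)))

theorem IsMaxFract.fract_le_of_lt_add (hα : Irrational α) (hp : IsMinFract α N p)
    (hq : IsMaxFract α N q) (h : N < p + q) : Int.fract (N * α) ≤ Int.fract (q * α) := by
  have hqN := hq.lt
  by_contra! hfract
  have hle := hp.add_fract_neg_le hα hq (k := N - q) (by omega) (by omega)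
  rw [Nat.cast_sub hq.lt.le, sub_mul, Int.fract_sub_of_fract_le hfract.le,
    hα.fract_natCast_mul_neg (by linarith [hq.one_le])] at hle
  linarith [Int.fract_nonneg (p * α), Int.fract_lt_one (N * α)]

theorem IsMinFract.le_fract_of_lt_add (hα : Irrational α) (hp : IsMinFract α N p)
    (hq : IsMaxFract α N q) (h : N < p + q) : Int.fract (p * α) ≤ Int.fract (N * α) := by
  have hle := (hp.neg hα).fract_le_of_lt_add hα.neg (hq.neg hα) (by omega)
  rw [hα.fract_natCast_mul_neg (by linarith [hp.lt, hp.one_le]),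
    hα.fract_natCast_mul_neg (by linarith [hp.one_le])] at hle
  linarith

theorem isMinFract_isMaxFract_of_le_add (hα : Irrational α) (hp : IsMinFract α N p)
    (hq : IsMaxFract α N q) {K : ℕ} (hNK : N ≤ K) (hK : K ≤ p + q) :
    IsMinFract α K p ∧ IsMaxFract α K q := by
  induction K, hNK using Nat.le_induction with
  | base => exact ⟨hp, hq⟩
  | succ K _ ih =>
    obtain ⟨hpK, hqK⟩ := ih (by omega)
    exact ⟨hpK.succ (hpK.le_fract_of_lt_add hα hqK (by omega)),
      hqK.succ (hqK.fract_le_of_lt_add hα hpK (by omega))⟩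

theorem IsMinFract.fract_lt_fract (hα : Irrational α) (hp : IsMinFract α N p)
    (hq : IsMaxFract α N q) (hN : 3 ≤ N) : Int.fract (p * α) < Int.fract (q * α) := by
  have h12 : Int.fract ((1 : ℕ) * α) ≠ Int.fract ((2 : ℕ) * α) :=
    fun h => absurd (hα.fract_natCast_mul_injective h) (by norm_num)
  have := hp.le (k := 1) one_ne_zero (by omega)
  have := hp.le (k := 2) two_ne_zero (by omega)
  have := hq.le (k := 1) one_ne_zero (by omega)
  have := hq.le (k := 2) two_ne_zero (by omega)
  rcases h12.lt_or_gt with h | h <;> linarith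

end MinMaxFract

section Gaps

variable {α : ℝ} {N p q m : ℕ}

theorem gapAt_eq_of_le_fract {v : ℝ} (hv : 0 < v)
    (hmem : ∃ m' < N, Int.fract (m' * α - m * α) = v)
    (hfwd : ∀ k, k ≠ 0 → m + k < N → v ≤ Int.fract (k * α))
    (hbwd : ∀ k, k ≠ 0 → k ≤ m → v ≤ Int.fract (k * -α)) :
    gapAt α N m = v := by
  refine IsLeast.csInf_eq ⟨⟨hv, hmem⟩, ?_⟩
  rintro d ⟨hd, m', hm', rfl⟩
  rcases lt_trichotomy m' m with h | rfl | h
  · calc v ≤ Int.fract (((m - m' : ℕ) : ℝ) * -α) := hbwd _ (by omega) (by omega)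
      _ = _ := by rw [Nat.cast_sub h.le]; ring_nf
  · simp at hd
  · calc v ≤ Int.fract (((m' - m : ℕ) : ℝ) * α) := hfwd _ (by omega) (by omega)
      _ = _ := by rw [Nat.cast_sub h.le]; ring_nf

theorem gapAt_eq_ite (hα : Irrational α) (hp : IsMinFract α N p) (hq : IsMaxFract α N q)
    (hm : m < N) :
    gapAt α N m = if m + p < N then Int.fract (p * α)
      else if q ≤ m then Int.fract (q * -α) else Int.fract (p * α) + Int.fract (q * -α) := by
  have hp1 := hp.one_le
  have hq1 := hq.one_le
  have hpN := hp.lt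
  have hqN := hq.lt
  have hNpq := hp.le_add hα hq
  split_ifs with hmp hqm
  · refine gapAt_eq_of_le_fract (hα.fract_natCast_mul_pos (by omega)) ⟨m + p, hmp, ?_⟩
      (fun k hk hkm => hp.le hk (by omega))
      (fun k hk hkm => hp.le_fract_neg hα hk (by omega))
    push_cast
    ring_nf
  · refine gapAt_eq_of_le_fract (hα.neg.fract_natCast_mul_pos (by omega)) ⟨m - q, by omega, ?_⟩
      (fun k hk hkm => hq.fract_neg_le hα hk (by omega))
      (fun k hk hkm => (hq.neg hα).le hk (by omega))
    rw [Nat.cast_sub hqm]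
    ring_nf
  · have hpq := hp.fract_lt_fract hα hq (by omega)
    have hq' := hα.fract_natCast_mul_neg (k := q) (by omega)
    refine gapAt_eq_of_le_fract
      (add_pos (hα.fract_natCast_mul_pos (by omega)) (hα.neg.fract_natCast_mul_pos (by omega)))
      ⟨m + p - q, by omega, ?_⟩
      (fun k hk hkm => hp.add_fract_neg_le hα hq hk (by omega))
      (fun k hk hkm => hq.add_le_fract_neg hα hp hk (by omega))
    rw [Nat.cast_sub (by omega), Nat.cast_add,
      show ((m : ℝ) + p - q) * α - m * α = p * α + q * -α by ring,
      Int.fract_add_of_fract_add_fract_lt_one (by linarith)]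

theorem gapAt_eq_add_iff (hα : Irrational α) (hp : IsMinFract α N p) (hq : IsMaxFract α N q)
    (hm : m < N) :
    gapAt α N m = Int.fract (p * α) + Int.fract (q * -α) ↔ N ≤ m + p ∧ m < q := by
  have ha := hα.fract_natCast_mul_pos (k := p) (by linarith [hp.one_le])
  have hb := hα.neg.fract_natCast_mul_pos (k := q) (by linarith [hq.one_le])
  have hNpq := hp.le_add hα hq
  rw [gapAt_eq_ite hα hp hq hm]
  split_ifs with hmp hqm
  · exact iff_of_false (by linarith) (by omega)
  · exact iff_of_false (by linarith) (by omega)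
  · exact iff_of_true rfl (by omega)

theorem gapSet_eq_of_lt_add (hα : Irrational α) (hp : IsMinFract α N p) (hq : IsMaxFract α N q)
    (h : N < p + q) :
    gapSet α N =
      {Int.fract (p * α), Int.fract (q * -α), Int.fract (p * α) + Int.fract (q * -α)} := by
  have hpN := hp.lt
  have hqN := hq.lt
  ext g
  simp only [gapSet, Finset.mem_image, Finset.mem_range, Finset.mem_insert, Finset.mem_singleton]
  constructor
  · rintro ⟨m, hm, rfl⟩
    rw [gapAt_eq_ite hα hp hq hm]
    split_ifs <;> simp
  · rintro (rfl | rfl | rfl)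
    · exact ⟨0, by omega, by rw [gapAt_eq_ite hα hp hq (by omega), if_pos (by omega)]⟩
    · exact ⟨N - 1, by omega, by rw [gapAt_eq_ite hα hp hq (by omega), if_neg (by omega),
        if_pos (by omega)]⟩
    · exact ⟨N - p, by omega, (gapAt_eq_add_iff hα hp hq (by omega)).2 (by omega)⟩

theorem gapSet_eq_of_eq_add (hα : Irrational α) (hp : IsMinFract α N p) (hq : IsMaxFract α N q)
    (h : N = p + q) :
    gapSet α N = {Int.fract (p * α), Int.fract (q * -α)} := by
  have hpN := hp.lt
  have hqN := hq.lt
  ext g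
  simp only [gapSet, Finset.mem_image, Finset.mem_range, Finset.mem_insert, Finset.mem_singleton]
  constructor
  · rintro ⟨m, hm, rfl⟩
    rw [gapAt_eq_ite hα hp hq hm]
    split_ifs with hmp hqm
    · simp
    · simp
    · omega
  · rintro (rfl | rfl)
    · exact ⟨0, by omega, by rw [gapAt_eq_ite hα hp hq (by omega), if_pos (by omega)]⟩
    · exact ⟨N - 1, by omega, by rw [gapAt_eq_ite hα hp hq (by omega), if_neg (by omega),
        if_pos (by omega)]⟩

theorem card_gapSet_eq_two_iff (hα : Irrational α) (hp : IsMinFract α N p)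
    (hq : IsMaxFract α N q) : (gapSet α N).card = 2 ↔ N = p + q := by
  have ha := hα.fract_natCast_mul_pos (k := p) (by linarith [hp.one_le])
  have hb := hα.neg.fract_natCast_mul_pos (k := q) (by linarith [hq.one_le])
  have hab := hα.fract_natCast_mul_ne_fract_natCast_mul_neg (j := p) (k := q)
    (by linarith [hp.one_le])
  rcases (hp.le_add hα hq).eq_or_lt with h | h
  · rw [gapSet_eq_of_eq_add hα hp hq h, Finset.card_pair hab]
    exact iff_of_true rfl h
  · rw [gapSet_eq_of_lt_add hα hp hq h,
      Finset.card_eq_three.2 ⟨_, _, _, hab, by linarith, by linarith, rfl⟩]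
    exact iff_of_false (by norm_num) h.ne

theorem count_add_gapMult (hα : Irrational α) (hp : IsMinFract α N p) (hq : IsMaxFract α N q) :
    (gapMult α N).count (Int.fract (p * α) + Int.fract (q * -α)) = p + q - N := by
  have hfilter : (Finset.range N).filter
      (fun m => Int.fract (p * α) + Int.fract (q * -α) = gapAt α N m) = Finset.Ico (N - p) q := by
    ext m
    simp only [Finset.mem_filter, Finset.mem_range, Finset.mem_Ico]
    constructor
    · rintro ⟨hm, h⟩
      have := (gapAt_eq_add_iff hα hp hq hm).1 h.symm
      omega
    · rintro ⟨h1, h2⟩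
      have hm : m < N := h2.trans hq.lt
      exact ⟨hm, ((gapAt_eq_add_iff hα hp hq hm).2 (by omega)).symm⟩
  rw [gapMult, Multiset.count_map, ← Finset.range_val, ← Finset.filter_val, hfilter,
    Finset.card_val, Nat.card_Ico]
  have := hp.lt
  omega

end Gaps

open Classical in
theorem count_of_largest_gaps (α : ℝ) (hα : Irrational α) (M N R : ℕ)
    (hrelM : (gapSet α M).card = 2) (hrelR : (gapSet α R).card = 2)
    (hbetween : ∀ K : ℕ, M < K → K < R → (gapSet α K).card ≠ 2)
    (hMN : M < N) (hNR : N < R) :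
    ∃ Δ₃ ∈ gapSet α N, (∀ g ∈ gapSet α N, g ≤ Δ₃) ∧
      (gapMult α N).count Δ₃ = R - N := by
  have hM : 2 ≤ M := hrelM ▸ (Finset.card_image_le.trans (Finset.card_range M).le)
  obtain ⟨p, hp⟩ := exists_isMinFract α (N := N) (by omega)
  obtain ⟨q, hq⟩ := exists_isMaxFract α (N := N) (by omega)
  have hN : N < p + q := (hp.le_add hα hq).lt_of_ne fun h =>
    hbetween N hMN hNR ((card_gapSet_eq_two_iff hα hp hq).2 h)
  have hR : R = p + q := by
    rcases lt_trichotomy R (p + q) with h | h | h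
    · obtain ⟨hpR, hqR⟩ := isMinFract_isMaxFract_of_le_add hα hp hq hNR.le h.le
      exact absurd ((card_gapSet_eq_two_iff hα hpR hqR).1 hrelR) h.ne
    · exact h
    · obtain ⟨hpK, hqK⟩ := isMinFract_isMaxFract_of_le_add hα hp hq hN.le le_rfl
      exact absurd ((card_gapSet_eq_two_iff hα hpK hqK).2 rfl) (hbetween _ (by omega) h)
  have ha := hα.fract_natCast_mul_pos (k := p) (by linarith [hp.one_le])
  have hb := hα.neg.fract_natCast_mul_pos (k := q) (by linarith [hq.one_le])
  rw [gapSet_eq_of_lt_add hα hp hq hN, hR, ← count_add_gapMult hα hp hq]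
  refine ⟨_, by simp, fun g hg => ?_, rfl⟩
  simp only [Finset.mem_insert, Finset.mem_singleton] at hg
  rcases hg with rfl | rfl | rfl <;> linarith
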